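/- arXiv:2205.12881 — 3 statements merged into one kernel-verified Lean document; each statement's English description precedes it below -/
import Mathlib

section
/- Let η be a positive finite measure on Θ with strict priorities. If the cutoff vector P ∈ [0,1]^H is η-market-clearing, then the associated interest function I^P is (η, V^det)-stable. -/
open MeasureTheory Filter
open scoped Classical ENNReal

noncomputable section

/-- A student type: a complete (linear) order on `Option H` (`none` is the outside option `∅`),
together with a priority score in `[0,1]` at each school. -/
abbrev Student (H : Type*) := LinearOrder (Option H) × (H → unitInterval)

instance (H : Type*) : MeasurableSpace (LinearOrder (Option H)) := ⊤
instance (H : Type*) : TopologicalSpace (LinearOrder (Option H)) := ⊥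

/-- `Prefers θ a b` : student `θ` strictly prefers option `a` to option `b`. -/
def Prefers {H : Type*} (θ : Student H) (a b : Option H) : Prop := θ.1.lt b a

/-- Priority of `θ` at option `h` (junk value `1` at the outside option). -/
def priOf {H : Type*} (θ : Student H) : Option H → unitInterval := fun o => o.elim 1 θ.2

abbrev MatchingFun (H : Type*) := Student H → Option H → ℝ
abbrev InterestFun (H : Type*) := H → unitInterval → ℝ
abbrev AdmissionsFun (H : Type*) := Option H → unitInterval → ℝ

section Defs
variable {H : Type*} [Fintype H]

/-- `M` maps each student to a probability distribution over `Option H`. -/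
def IsMatchingFun (M : MatchingFun H) : Prop :=
  ∀ θ : Student H, (∀ h, 0 ≤ M θ h) ∧ ∑ h : Option H, M θ h = 1

/-- Interest functions are componentwise weakly decreasing and nonnegative. -/
def IsInterestFun (I : InterestFun H) : Prop :=
  ∀ h, Antitone (I h) ∧ ∀ p, 0 ≤ I h p

/-- Admissions functions are componentwise weakly increasing with values in `[0,1]`,
and everyone is always admitted to the outside option. -/
def IsAdmissionsFun (A : AdmissionsFun H) : Prop :=
  (∀ h, Monotone (A h) ∧ ∀ p, A h p ∈ Set.Icc (0:ℝ) 1) ∧ ∀ p, A none p = 1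

/-- The interest function `𝓘(M)` of a matching `M`. -/
def interestOf (η : Measure (Student H)) (M : MatchingFun H) : InterestFun H :=
  fun h p => ∫ θ, (if p ≤ θ.2 h then (1:ℝ) else 0) *
    (1 - ∑ h' ∈ Finset.univ.filter (fun h' : Option H => Prefers θ h' (some h)), M θ h') ∂η

/-- The admissions function `𝓐(I)` of an interest function `I`, given a vacancy function `V`
and capacities `C`. -/
def admissionsOf (V : ℝ → ℕ → ℝ) (C : H → ℕ) (I : InterestFun H) : AdmissionsFun H :=
  fun h p => h.elim 1 fun h0 => V (I h0 p) (C h0)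

/-- The matching `𝓜(A)` of an admissions function `A`. -/
def matchingOf (A : AdmissionsFun H) : MatchingFun H := fun θ h =>
  A h (priOf θ h) *
    ∏ h' ∈ Finset.univ.filter (fun h' : Option H => Prefers θ h' h), (1 - A h' (priOf θ h'))

/-- A matching `M` is `(η, V)`-stable if `M = 𝓜(𝓐(𝓘(M)))`. -/
def StableMatching (η : Measure (Student H)) (V : ℝ → ℕ → ℝ) (C : H → ℕ)
    (M : MatchingFun H) : Prop :=
  IsMatchingFun M ∧ M = matchingOf (admissionsOf V C (interestOf η M))

/-- An interest function `I` is `(η, V)`-stable if `I = 𝓘(𝓜(𝓐(I)))`. -/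
def StableInterest (η : Measure (Student H)) (V : ℝ → ℕ → ℝ) (C : H → ℕ)
    (I : InterestFun H) : Prop :=
  IsInterestFun I ∧ I = interestOf η (matchingOf (admissionsOf V C I))

/-- An admissions function `A` is `(η, V)`-stable if `A = 𝓐(𝓘(𝓜(A)))`. -/
def StableAdmissions (η : Measure (Student H)) (V : ℝ → ℕ → ℝ) (C : H → ℕ)
    (A : AdmissionsFun H) : Prop :=
  IsAdmissionsFun A ∧ A = admissionsOf V C (interestOf η (matchingOf A))

/-- An outcome `(M, I, A)` is `(η, V)`-stable. -/
def StableOutcome (η : Measure (Student H)) (V : ℝ → ℕ → ℝ) (C : H → ℕ)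
    (M : MatchingFun H) (I : InterestFun H) (A : AdmissionsFun H) : Prop :=
  IsMatchingFun M ∧ IsInterestFun I ∧ IsAdmissionsFun A ∧
  M = matchingOf A ∧ I = interestOf η M ∧ A = admissionsOf V C I

/-- The deterministic vacancy function `V^det(λ, C) = 1(λ < C)`. -/
def Vdet : ℝ → ℕ → ℝ := fun lam C => if lam < (C : ℝ) then 1 else 0

/-- The Poisson vacancy function `V^pois(λ, C) = Σ_{k<C} e^{-λ} λ^k / k!`. -/
def Vpois : ℝ → ℕ → ℝ := fun lam C =>
  ∑ k ∈ Finset.range C, Real.exp (-lam) * lam ^ k / (Nat.factorial k : ℝ)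

/-- A measure `η` on student types has strict priorities. -/
def StrictPriorities (η : Measure (Student H)) : Prop :=
  ∀ (h : H) (p : unitInterval), η {θ : Student H | Prefers θ (some h) none ∧ θ.2 h = p} = 0

end Defs

instance : Fact ((0:ℝ) ≤ 1) := ⟨zero_le_one⟩

section Cutoffs
variable {H : Type*} [Fintype H]

/-- The interest function `I^P` associated with a cutoff vector `P`: a student contributes to
`I^P_h(p)` if her priority at `h` exceeds `p` and she does not clear the cutoff at any option she
prefers to `h` (the outside option always admits, so a student preferring `∅` to `h` never
contributes). -/
def interestP (η : Measure (Student H)) (P : H → unitInterval) : InterestFun H :=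
  fun h p => ∫ θ, (if p < θ.2 h then (1:ℝ) else 0) *
    ∏ h' ∈ Finset.univ.filter (fun h' : Option H => Prefers θ h' (some h)),
      (h'.elim 0 fun h0 => if θ.2 h0 ≤ P h0 then (1:ℝ) else 0) ∂η

/-- Demand `D_h(P)` for school `h` at cutoffs `P`. -/
def demand (η : Measure (Student H)) (P : H → unitInterval) (h : H) : ℝ :=
  interestP η P h (P h)

/-- A cutoff vector `P` is `η`-market-clearing. -/
def MarketClearing (η : Measure (Student H)) (C : H → ℕ) (P : H → unitInterval) : Prop :=
  ∀ h : H, demand η P h ≤ (C h : ℝ) ∧ (0 < P h → demand η P h = (C h : ℝ))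

/-- The cutoff vector `𝓟(I)` associated with an interest function `I`:
`𝓟_h(I) = inf {p : I_h(p) < C_h}` (in the complete lattice `[0,1]`). -/
def cutoffOf (C : H → ℕ) (I : InterestFun H) (h : H) : unitInterval :=
  sInf {p : unitInterval | I h p < (C h : ℝ)}

end Cutoffs

/-!
Under deterministic vacancies school `h` admits priority `q` iff `I^P_h(q) < C_h`; market clearing
makes this agree with the cutoff rule `q > P_h` for almost every student who finds `h` acceptable.
Below the cutoff `I^P_h(q) ≥ D_h(P) = C_h` (the cutoff is then positive), the students exactly at
the cutoff form a null set by strict priorities, and above it `I^P_h ≤ C_h`, with equality only on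
a band of priorities where `I^P_h` is constant, so that the band contains almost no student who is
rejected by all the schools she prefers to `h`. A disagreement at a school the student never reaches
does not change her outcome, and the telescoping identity
`1 - ∑_{h' ≻ h} 𝓜(A)_{h'} = ∏_{h' ≻ h} (1 - A_{h'})` turns `𝓘(𝓜(𝓐(I^P)))` back into `I^P`.
-/

theorem Finset.prod_eq_prod_of_ne_imp_exists_lt_eq_zero {ι M : Type*} [LinearOrder ι]
    [CommMonoidWithZero M] {s : Finset ι} {f g : ι → M}
    (h : ∀ x ∈ s, f x ≠ g x → ∃ y ∈ s, y < x ∧ f y = 0) :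
    ∏ x ∈ s, f x = ∏ x ∈ s, g x := by
  by_cases hfg : ∀ x ∈ s, f x = g x
  · exact Finset.prod_congr rfl hfg
  push Not at hfg
  obtain ⟨x, hx, hmin⟩ := (s.filter fun x => f x ≠ g x).exists_min_image id
    (hfg.imp fun _ hx => Finset.mem_filter.2 hx)
  obtain ⟨hxs, hfgx⟩ := Finset.mem_filter.1 hx
  obtain ⟨y, hys, hyx, hfy⟩ := h x hxs hfgx
  have hgy : g y = 0 := by
    by_contra hgy
    exact (hmin y (Finset.mem_filter.2 ⟨hys, hfy ▸ Ne.symm hgy⟩)).not_gt hyx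
  rw [Finset.prod_eq_zero hys hfy, Finset.prod_eq_zero hys hgy]

theorem measure_biUnion_null_of_monotone {Ω α : Type*} [MeasurableSpace Ω] {μ : Measure Ω}
    [ConditionallyCompleteLinearOrder α] [TopologicalSpace α] [OrderTopology α]
    [FirstCountableTopology α] {S : Set α} (hS : BddAbove S) {E : α → Set Ω} (hE : Monotone E)
    (hnull : ∀ q ∈ S, μ (E q) = 0) : μ (⋃ q ∈ S, E q) = 0 := by
  rcases S.eq_empty_or_nonempty with rfl | hne
  · simp
  obtain ⟨u, -, hu, huS⟩ := exists_seq_tendsto_sSup hne hS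
  refine measure_mono_null (t := (⋃ n, E (u n)) ∪ ⋃ (_ : sSup S ∈ S), E (sSup S)) ?_
    (measure_union_null (measure_iUnion_null fun n => hnull _ (huS n))
      (measure_iUnion_null fun h => hnull _ h))
  refine Set.iUnion₂_subset fun q hq => ?_
  rcases (le_csSup hS hq).lt_or_eq with hlt | rfl
  · obtain ⟨n, hn⟩ := (hu.eventually (lt_mem_nhds hlt)).exists
    exact (hE hn.le).trans (Set.subset_iUnion (fun n => E (u n)) n) |>.trans
      Set.subset_union_left
  · exact (Set.subset_iUnion (fun _ : sSup S ∈ S => E (sSup S)) hq).trans Set.subset_union_right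

section Preferences
variable {H : Type*}

theorem Prefers.trans {θ : Student H} {a b c : Option H} (hab : Prefers θ a b)
    (hbc : Prefers θ b c) : Prefers θ a c :=
  @lt_trans _ (@PartialOrder.toPreorder _ (@LinearOrder.toPartialOrder _ θ.1)) _ _ _ hbc hab

theorem prefers_or_prefers_of_ne (θ : Student H) {a b : Option H} (hab : a ≠ b) :
    Prefers θ a b ∨ Prefers θ b a :=
  (@lt_or_gt_of_ne _ θ.1 _ _ hab).symm

theorem measurable_priOf (o : Option H) : Measurable fun θ : Student H => priOf θ o := by
  cases o with
  | none => exact measurable_const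
  | some h => exact (measurable_pi_apply h).comp measurable_snd

def cutoffAdmissions (P : H → unitInterval) : AdmissionsFun H :=
  fun o q => o.elim 1 fun h => if P h < q then 1 else 0

theorem cutoffAdmissions_eq_zero_or_one (P : H → unitInterval) (o : Option H) (q : unitInterval) :
    cutoffAdmissions P o q = 0 ∨ cutoffAdmissions P o q = 1 := by
  cases o with
  | none => exact Or.inr rfl
  | some h => exact ite_eq_or_eq _ _ _ |>.symm

theorem cutoffAdmissions_mem_Icc (P : H → unitInterval) (o : Option H) (q : unitInterval) :
    cutoffAdmissions P o q ∈ Set.Icc (0 : ℝ) 1 := by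
  rcases cutoffAdmissions_eq_zero_or_one P o q with h | h <;> simp [h]

theorem measurable_cutoffAdmissions (P : H → unitInterval) (o : Option H) :
    Measurable (cutoffAdmissions P o) := by
  cases o with
  | none => exact measurable_const
  | some h => exact Measurable.ite measurableSet_Ioi measurable_const measurable_const

theorem ae_priority_ne {η : Measure (Student H)} (hη : StrictPriorities η) (h : H)
    (p : unitInterval) :
    ∀ᵐ θ ∂η, Prefers θ (some h) none → θ.2 h ≠ p := by
  filter_upwards [measure_eq_zero_iff_ae_notMem.1 (hη h p)] with θ hθ hacc hp
  exact hθ ⟨hacc, hp⟩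

end Preferences

section RejectedAbove
variable {H : Type*} [Fintype H]

/-- The probability that `θ` is rejected by every option she prefers to `o`. -/
def rejectedAbove (A : AdmissionsFun H) (θ : Student H) (o : Option H) : ℝ :=
  ∏ h' ∈ Finset.univ.filter (fun h' => Prefers θ h' o), (1 - A h' (priOf θ h'))

theorem one_sub_sum_matchingOf (A : AdmissionsFun H) (θ : Student H) (o : Option H) :
    1 - ∑ h' ∈ Finset.univ.filter (fun h' => Prefers θ h' o), matchingOf A θ h' =
      rejectedAbove A θ o := by
  -- in this order `y < x` means that `θ` prefers `y` to `x`
  let _ : LinearOrder (Option H) := @OrderDual.instLinearOrder _ θ.1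
  refine Eq.symm <| (Finset.prod_one_sub_ordered _ _).trans <|
    congrArg (1 - ·) <| Finset.sum_congr rfl fun x hx =>
      congrArg _ (Finset.prod_congr ?_ fun _ _ => rfl)
  ext y
  have hxo : Prefers θ x o := (Finset.mem_filter.1 hx).2
  simp only [Finset.mem_filter, Finset.mem_univ, true_and]
  exact ⟨And.right, fun hy => ⟨Prefers.trans hy hxo, hy⟩⟩

theorem interestOf_matchingOf (η : Measure (Student H)) (A : AdmissionsFun H) (h : H)
    (p : unitInterval) : interestOf η (matchingOf A) h p =
      ∫ θ, (if p ≤ θ.2 h then 1 else 0) * rejectedAbove A θ (some h) ∂η := by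
  simp only [interestOf, one_sub_sum_matchingOf]

theorem rejectedAbove_eq_zero {A : AdmissionsFun H} (hA : ∀ q, A none q = 1) {θ : Student H}
    {o : Option H} (ho : Prefers θ none o) : rejectedAbove A θ o = 0 :=
  Finset.prod_eq_zero (Finset.mem_filter.2 ⟨Finset.mem_univ _, ho⟩) (by rw [hA, sub_self])

theorem rejectedAbove_nonneg {A : AdmissionsFun H} (hA : ∀ o q, A o q ≤ 1) (θ : Student H)
    (o : Option H) : 0 ≤ rejectedAbove A θ o :=
  Finset.prod_nonneg fun _ _ => sub_nonneg.2 (hA _ _)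

theorem rejectedAbove_le_one {A : AdmissionsFun H} (hA : ∀ o q, A o q ∈ Set.Icc (0 : ℝ) 1)
    (θ : Student H) (o : Option H) : rejectedAbove A θ o ≤ 1 :=
  Finset.prod_le_one (fun _ _ => sub_nonneg.2 (hA _ _).2) fun _ _ => sub_le_self _ (hA _ _).1

theorem measurable_rejectedAbove {A : AdmissionsFun H} (hA : ∀ o, Measurable (A o))
    (o : Option H) : Measurable (rejectedAbove A · o) := by
  simp_rw [rejectedAbove, Finset.prod_filter]
  refine Finset.measurable_prod _ fun h' _ => Measurable.ite ?_
    (((hA h').comp (measurable_priOf h')).const_sub 1) measurable_const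
  exact measurable_fst
    (MeasurableSpace.measurableSet_top (s := {L : LinearOrder (Option H) | L.lt o h'}))

def cutoffIntegrand (P : H → unitInterval) (h : H) (q : unitInterval) (θ : Student H) : ℝ :=
  (if q < θ.2 h then 1 else 0) * rejectedAbove (cutoffAdmissions P) θ (some h)

theorem interestP_eq_integral_cutoffIntegrand (η : Measure (Student H)) (P : H → unitInterval)
    (h : H) (q : unitInterval) : interestP η P h q = ∫ θ, cutoffIntegrand P h q θ ∂η := by
  refine integral_congr_ae (ae_of_all _ fun θ => congrArg _ (Finset.prod_congr rfl fun o _ => ?_))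
  cases o with
  | none => simp [cutoffAdmissions, priOf]
  | some h0 =>
    by_cases hθ : θ.2 h0 ≤ P h0
    · simp [cutoffAdmissions, priOf, hθ, not_lt.2 hθ]
    · simp [cutoffAdmissions, priOf, hθ, not_le.1 hθ]

theorem cutoffIntegrand_nonneg (P : H → unitInterval) (h : H) (q : unitInterval)
    (θ : Student H) : 0 ≤ cutoffIntegrand P h q θ :=
  mul_nonneg (by split_ifs <;> norm_num)
    (rejectedAbove_nonneg (fun o q => (cutoffAdmissions_mem_Icc P o q).2) θ _)

theorem cutoffIntegrand_antitone (P : H → unitInterval) (h : H) (θ : Student H) :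
    Antitone (cutoffIntegrand P h · θ) := fun p q hpq =>
  mul_le_mul_of_nonneg_right
    (by by_cases hq : q < θ.2 h <;> simp [hq, hpq.trans_lt]; split_ifs <;> norm_num)
    (rejectedAbove_nonneg (fun o q => (cutoffAdmissions_mem_Icc P o q).2) θ _)

theorem integrable_cutoffIntegrand (η : Measure (Student H)) [IsFiniteMeasure η]
    (P : H → unitInterval) (h : H) (q : unitInterval) : Integrable (cutoffIntegrand P h q) η := by
  refine Integrable.mono' (integrable_const 1) ?_ (ae_of_all _ fun θ => ?_)
  · exact ((Measurable.ite ((measurable_pi_apply h).comp measurable_snd measurableSet_Ioi)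
      measurable_const measurable_const).mul
      (measurable_rejectedAbove (measurable_cutoffAdmissions P) _)).aestronglyMeasurable
  · rw [Real.norm_of_nonneg (cutoffIntegrand_nonneg P h q θ)]
    exact mul_le_one₀ (by split_ifs <;> norm_num)
      (rejectedAbove_nonneg (fun o q => (cutoffAdmissions_mem_Icc P o q).2) θ _)
      (rejectedAbove_le_one (cutoffAdmissions_mem_Icc P) θ _)

end RejectedAbove

section InterestP
variable {H : Type*} [Fintype H] {η : Measure (Student H)} [IsFiniteMeasure η]
  {C : H → ℕ} {P : H → unitInterval}

theorem interestP_antitone (h : H) : Antitone (interestP η P h) := fun p q hpq => by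
  simp only [interestP_eq_integral_cutoffIntegrand]
  exact integral_mono (integrable_cutoffIntegrand η P h q) (integrable_cutoffIntegrand η P h p)
    fun θ => cutoffIntegrand_antitone P h θ hpq

theorem isInterestFun_interestP : IsInterestFun (interestP η P) := fun h =>
  ⟨interestP_antitone h, fun q => by
    rw [interestP_eq_integral_cutoffIntegrand]
    exact integral_nonneg (cutoffIntegrand_nonneg P h q)⟩

theorem measure_band_null_of_interestP_le {h : H} {p q : unitInterval} (hpq : p ≤ q)
    (hI : interestP η P h p ≤ interestP η P h q) :
    η {θ | p < θ.2 h ∧ θ.2 h ≤ q ∧ rejectedAbove (cutoffAdmissions P) θ (some h) = 1} = 0 := by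
  have hgap : ∫ θ, (cutoffIntegrand P h p θ - cutoffIntegrand P h q θ) ∂η = 0 := by
    rw [integral_sub (integrable_cutoffIntegrand η P h p) (integrable_cutoffIntegrand η P h q),
      ← interestP_eq_integral_cutoffIntegrand, ← interestP_eq_integral_cutoffIntegrand]
    linarith [interestP_antitone (η := η) (P := P) h hpq]
  have hae := (integral_eq_zero_iff_of_nonneg
    (fun θ => sub_nonneg.2 (cutoffIntegrand_antitone P h θ hpq))
    ((integrable_cutoffIntegrand η P h p).sub (integrable_cutoffIntegrand η P h q))).1 hgap
  refine measure_mono_null (fun θ ⟨hpθ, hθq, hR⟩ => ?_) (ae_iff.1 hae)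
  simp [cutoffIntegrand, hpθ, not_lt.2 hθq, hR]

theorem ae_rejectedAbove_ne_one_of_oversubscribed (hP : MarketClearing η C P) (h : H) :
    ∀ᵐ θ ∂η, P h < θ.2 h → (C h : ℝ) ≤ interestP η P h (θ.2 h) →
      rejectedAbove (cutoffAdmissions P) θ (some h) ≠ 1 := by
  let E q := {θ : Student H | P h < θ.2 h ∧ θ.2 h ≤ q ∧
    rejectedAbove (cutoffAdmissions P) θ (some h) = 1}
  have hnull := measure_biUnion_null_of_monotone (μ := η) (OrderTop.bddAbove
    {q | P h < q ∧ (C h : ℝ) ≤ interestP η P h q}) (E := E)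
    (fun _ _ hqr _ ⟨hPθ, hθq, hR⟩ => ⟨hPθ, hθq.trans hqr, hR⟩)
    fun q ⟨hPq, hCq⟩ => measure_band_null_of_interestP_le hPq.le ((hP h).1.trans hCq)
  filter_upwards [measure_eq_zero_iff_ae_notMem.1 hnull] with θ hθ hPθ hCθ hR
  exact hθ (Set.mem_biUnion ⟨hPθ, hCθ⟩ ⟨hPθ, le_rfl, hR⟩)

theorem lt_and_le_interestP_of_cutoffAdmissions_ne (hP : MarketClearing η C P) {h : H}
    {q : unitInterval} (hq : q ≠ P h)
    (hne : cutoffAdmissions P (some h) q ≠ admissionsOf Vdet C (interestP η P) (some h) q) :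
    P h < q ∧ (C h : ℝ) ≤ interestP η P h q := by
  simp only [cutoffAdmissions, admissionsOf, Vdet, Option.elim_some] at hne
  rcases hq.lt_or_gt with hqP | hPq
  · have hC : (C h : ℝ) ≤ interestP η P h q :=
      ((hP h).2 (hqP.trans_le' unitInterval.nonneg')).symm.le.trans (interestP_antitone h hqP.le)
    simp [not_lt.2 hqP.le, not_lt.2 hC] at hne
  · refine ⟨hPq, not_lt.1 fun hI => ?_⟩
    simp [hPq, hI] at hne

theorem rejectedAbove_cutoffAdmissions_eq (hP : MarketClearing η C P) {θ : Student H}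
    (hθP : ∀ h, Prefers θ (some h) none → θ.2 h ≠ P h)
    (hθC : ∀ h, P h < θ.2 h → (C h : ℝ) ≤ interestP η P h (θ.2 h) →
      rejectedAbove (cutoffAdmissions P) θ (some h) ≠ 1) (o : Option H) :
    rejectedAbove (cutoffAdmissions P) θ o =
      rejectedAbove (admissionsOf Vdet C (interestP η P)) θ o := by
  -- in this order `y < x` means that `θ` prefers `y` to `x`
  let _ : LinearOrder (Option H) := @OrderDual.instLinearOrder _ θ.1
  refine Finset.prod_eq_prod_of_ne_imp_exists_lt_eq_zero fun x hx hfg => ?_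
  have hxo : Prefers θ x o := (Finset.mem_filter.1 hx).2
  have hne : cutoffAdmissions P x (priOf θ x) ≠
      admissionsOf Vdet C (interestP η P) x (priOf θ x) := fun heq => hfg (by rw [heq])
  obtain ⟨h, rfl⟩ : ∃ h, x = some h := Option.ne_none_iff_exists'.1 (by rintro rfl; exact hne rfl)
  rcases prefers_or_prefers_of_ne θ (Option.some_ne_none h) with hacc | hunacc
  · obtain ⟨hPθ, hCθ⟩ := lt_and_le_interestP_of_cutoffAdmissions_ne hP (hθP h hacc) hne
    obtain ⟨y, hy, hy1⟩ := Finset.exists_ne_one_of_prod_ne_one (hθC h hPθ hCθ)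
    have hyh : Prefers θ y (some h) := (Finset.mem_filter.1 hy).2
    refine ⟨y, Finset.mem_filter.2 ⟨Finset.mem_univ _, hyh.trans hxo⟩, hyh, ?_⟩
    rcases cutoffAdmissions_eq_zero_or_one P y (priOf θ y) with h0 | h1
    · simp [h0] at hy1
    · rw [h1, sub_self]
  · exact ⟨none, Finset.mem_filter.2 ⟨Finset.mem_univ _, hunacc.trans hxo⟩, hunacc, sub_self 1⟩

end InterestP

/-- If `η` is a positive finite measure with strict priorities and the cutoff
vector `P ∈ [0,1]^H` is `η`-market-clearing, then `I^P` is `(η, V^det)`-stable. -/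
theorem stmt2 {H : Type*} [Fintype H] (C : H → ℕ) (η : Measure (Student H))
    [IsFiniteMeasure η] (hη : StrictPriorities η) (P : H → unitInterval)
    (hP : MarketClearing η C P) :
    StableInterest η Vdet C (interestP η P) := by
  refine ⟨isInterestFun_interestP, funext fun h => funext fun p => ?_⟩
  rw [interestP_eq_integral_cutoffIntegrand, interestOf_matchingOf]
  refine integral_congr_ae ?_
  filter_upwards [ae_priority_ne hη h p, ae_all_iff.2 fun h => ae_priority_ne hη h (P h),
    ae_all_iff.2 (ae_rejectedAbove_ne_one_of_oversubscribed hP)] with θ hθp hθP hθC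
  rw [cutoffIntegrand, rejectedAbove_cutoffAdmissions_eq hP hθP hθC]
  rcases prefers_or_prefers_of_ne θ (Option.some_ne_none h) with hacc | hunacc
  · simp only [Ne.le_iff_lt (hθp hacc).symm]
  · simp only [rejectedAbove_eq_zero (A := admissionsOf Vdet C (interestP η P)) (fun _ => rfl)
      hunacc, mul_zero]
end
end

section
/- Fix m, C ∈ ℕ and ε > 0. If λ ∈ ℝ₊ is such that |V^pois(mλ, mC) − V^det(λ, C)| > ε, then C − √(2C·log(1/ε)/m) ≤ λ ≤ C + √(2C·log(1/ε)/m) + 4·log(1/ε)/m. -/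
noncomputable section

/-! Both tails of the Poisson law of mean `μ` at `n` are bounded by the Chernoff quantity
`(μ / n) ^ n * exp (n - μ)`, which comes from tilting the Poisson weights of mean `μ` to those of
mean `n`. The inequalities `log r ≤ (r - 1) - (r - 1) ^ 2 / 2` for `r ≤ 1` and
`log t ≤ sinh (log t) = (t - t⁻¹) / 2` for `t ≥ 1` turn it into the Gaussian bounds
`exp (-(μ - n) ^ 2 / (2 * max μ n))`. For `μ = mλ`, `n = mC` a discrepancy above `ε` thus forces
`(λ - C) ^ 2 < 2 * max λ C * log (1 / ε) / m`; when `λ ≥ C` this is a quadratic inequality in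
`λ - C`, solved by `λ - C ≤ √(2C log(1/ε)/m) + 2 log(1/ε)/m`. -/

open Real Finset Nat

namespace Real

lemma le_exp_sub_one_sub_sq_div_two {r : ℝ} (hr₀ : 0 ≤ r) (hr₁ : r ≤ 1) :
    r ≤ exp (r - 1 - (r - 1) ^ 2 / 2) := by
  rcases hr₀.eq_or_lt with rfl | hr₀
  · exact (exp_pos _).le
  refine le_exp_of_log_le ?_
  have hx : 0 ≤ 1 - r := by linarith
  have hseries := hasSum_pow_div_log_of_abs_lt_one (x := 1 - r)
    (by rw [abs_lt]; constructor <;> linarith)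
  have hlog : (1 - r) + (1 - r) ^ 2 / 2 ≤ -log r := by
    simpa [sum_range_succ, one_add_one_eq_two] using
      sum_le_hasSum (range 2) (fun i _ ↦ by positivity) hseries
  linarith

lemma le_exp_sub_inv_div_two {t : ℝ} (ht : 1 ≤ t) : t ≤ exp ((t - t⁻¹) / 2) := by
  have ht₀ : 0 < t := one_pos.trans_le ht
  refine le_exp_of_log_le ?_
  rw [← sinh_log ht₀]
  exact self_le_sinh_iff.2 (log_nonneg ht)

end Real

def poissonTerm (μ : ℝ) (k : ℕ) : ℝ := exp (-μ) * μ ^ k / k !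

lemma Vpois_eq_sum_poissonTerm (μ : ℝ) (n : ℕ) : Vpois μ n = ∑ k ∈ range n, poissonTerm μ k := rfl

lemma poissonTerm_nonneg {μ : ℝ} (hμ : 0 ≤ μ) (k : ℕ) : 0 ≤ poissonTerm μ k := by
  unfold poissonTerm; positivity

lemma hasSum_poissonTerm (μ : ℝ) : HasSum (poissonTerm μ) 1 := by
  have := (NormedSpace.expSeries_div_hasSum_exp μ).mul_left (exp (-μ))
  rw [← exp_eq_exp_ℝ, ← exp_add, neg_add_cancel, exp_zero] at this
  exact this.congr_fun fun k ↦ mul_div_assoc _ _ _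

/-- Exponential tilting: `poissonTerm μ k = (μ / ν) ^ k * exp (ν - μ) * poissonTerm ν k`. -/
lemma poissonTerm_le_tilt {μ ν : ℝ} (hν : 0 < ν) {k n : ℕ} (hkn : (μ / ν) ^ k ≤ (μ / ν) ^ n) :
    poissonTerm μ k ≤ (μ / ν) ^ n * exp (ν - μ) * poissonTerm ν k := by
  have htilt : poissonTerm μ k = (μ / ν) ^ k * exp (ν - μ) * poissonTerm ν k := by
    have : exp (ν - μ) * exp (-ν) = exp (-μ) := by rw [← exp_add]; ring_nf
    simp only [poissonTerm, div_pow]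
    field_simp
    rw [← this]; ring
  rw [htilt]
  exact mul_le_mul_of_nonneg_right (mul_le_mul_of_nonneg_right hkn (exp_pos _).le)
    (poissonTerm_nonneg hν.le k)

lemma Vpois_nonneg {μ : ℝ} (hμ : 0 ≤ μ) (n : ℕ) : 0 ≤ Vpois μ n :=
  sum_nonneg fun k _ ↦ poissonTerm_nonneg hμ k

lemma Vpois_le_one {μ : ℝ} (hμ : 0 ≤ μ) (n : ℕ) : Vpois μ n ≤ 1 :=
  sum_le_hasSum _ (fun k _ ↦ poissonTerm_nonneg hμ k) (hasSum_poissonTerm μ)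

lemma Vpois_le_of_le {μ : ℝ} {n : ℕ} (hn : 0 < n) (hnμ : (n : ℝ) ≤ μ) :
    Vpois μ n ≤ (μ / n) ^ n * exp (n - μ) := by
  have hn' : (0 : ℝ) < n := by exact_mod_cast hn
  have hr : 1 ≤ μ / n := (one_le_div hn').2 hnμ
  calc Vpois μ n ≤ ∑ k ∈ range n, (μ / n) ^ n * exp (n - μ) * poissonTerm n k :=
        sum_le_sum fun k hk ↦ poissonTerm_le_tilt hn' (pow_le_pow_right₀ hr (mem_range.1 hk).le)
    _ ≤ (μ / n) ^ n * exp (n - μ) * 1 := by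
        rw [← mul_sum]
        gcongr
        exact sum_le_hasSum _ (fun k _ ↦ poissonTerm_nonneg hn'.le k) (hasSum_poissonTerm n)
    _ = (μ / n) ^ n * exp (n - μ) := mul_one _

lemma one_sub_Vpois_le_of_le {μ : ℝ} {n : ℕ} (hn : 0 < n) (hμ : 0 ≤ μ) (hμn : μ ≤ n) :
    1 - Vpois μ n ≤ (μ / n) ^ n * exp (n - μ) := by
  have hn' : (0 : ℝ) < n := by exact_mod_cast hn
  have hr₀ : 0 ≤ μ / n := by positivity
  have hr₁ : μ / n ≤ 1 := (div_le_one hn').2 hμn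
  have hsum := (hasSum_poissonTerm (n : ℝ)).summable
  calc 1 - Vpois μ n = ∑' j, poissonTerm μ (j + n) := by
        rw [← (hasSum_poissonTerm μ).tsum_eq,
          ← (hasSum_poissonTerm μ).summable.sum_add_tsum_nat_add n, Vpois_eq_sum_poissonTerm,
          add_sub_cancel_left]
    _ ≤ ∑' j, (μ / n) ^ n * exp (n - μ) * poissonTerm n (j + n) :=
        Summable.tsum_le_tsum
          (fun j ↦ poissonTerm_le_tilt hn' (pow_le_pow_of_le_one hr₀ hr₁ (Nat.le_add_left n j)))
          ((summable_nat_add_iff n).2 (hasSum_poissonTerm μ).summable)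
          (((summable_nat_add_iff n).2 hsum).mul_left _)
    _ ≤ (μ / n) ^ n * exp (n - μ) * 1 := by
        rw [tsum_mul_left]
        gcongr
        rw [← (hasSum_poissonTerm (n : ℝ)).tsum_eq]
        exact tsum_comp_le_tsum_of_inj hsum (poissonTerm_nonneg hn'.le) (add_left_injective n)
    _ = (μ / n) ^ n * exp (n - μ) := mul_one _

lemma Vpois_le_exp_neg_sq {μ : ℝ} {n : ℕ} (hn : 0 < n) (hnμ : (n : ℝ) ≤ μ) :
    Vpois μ n ≤ exp (-(μ - n) ^ 2 / (2 * μ)) := by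
  have hn' : (0 : ℝ) < n := by exact_mod_cast hn
  have hμ : 0 < μ := hn'.trans_le hnμ
  calc Vpois μ n ≤ (μ / n) ^ n * exp (n - μ) := Vpois_le_of_le hn hnμ
    _ ≤ exp ((μ / n - (μ / n)⁻¹) / 2) ^ n * exp (n - μ) := by
        gcongr
        exact le_exp_sub_inv_div_two ((one_le_div hn').2 hnμ)
    _ = exp (-(μ - n) ^ 2 / (2 * μ)) := by
        rw [← exp_nat_mul, ← exp_add]
        congr 1
        field_simp
        ring

lemma one_sub_Vpois_le_exp_neg_sq {μ : ℝ} {n : ℕ} (hn : 0 < n) (hμ : 0 ≤ μ) (hμn : μ ≤ n) :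
    1 - Vpois μ n ≤ exp (-(μ - n) ^ 2 / (2 * n)) := by
  have hn' : (0 : ℝ) < n := by exact_mod_cast hn
  calc 1 - Vpois μ n ≤ (μ / n) ^ n * exp (n - μ) := one_sub_Vpois_le_of_le hn hμ hμn
    _ ≤ exp (μ / n - 1 - (μ / n - 1) ^ 2 / 2) ^ n * exp (n - μ) := by
        gcongr
        exact le_exp_sub_one_sub_sq_div_two (by positivity) ((div_le_one hn').2 hμn)
    _ = exp (-(μ - n) ^ 2 / (2 * n)) := by
        rw [← exp_nat_mul, ← exp_add]
        congr 1
        field_simp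
        ring

lemma sq_sub_lt_of_lt_exp {ε m a b : ℝ} (hε : 0 < ε) (hm : 0 < m) (hb : 0 < b)
    (h : ε < exp (-(m * a - m * b) ^ 2 / (2 * (m * b)))) :
    (a - b) ^ 2 < 2 * b * log (1 / ε) / m := by
  rw [← log_lt_iff_lt_exp hε] at h
  rw [one_div, log_inv, lt_div_iff₀ hm]
  have : -(m * a - m * b) ^ 2 / (2 * (m * b)) = -((a - b) ^ 2 * m) / (2 * b) := by
    field_simp
  rw [this, lt_div_iff₀ (by positivity)] at h
  linarith

lemma sq_sub_lt_of_lt_one_sub_Vpois {m C : ℕ} (hm : 0 < m) {ε lam : ℝ} (hε : 0 < ε)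
    (hlam : 0 ≤ lam) (hlt : lam < C) (h : ε < 1 - Vpois (m * lam) (m * C)) :
    (lam - C) ^ 2 < 2 * C * log (1 / ε) / m := by
  have hC : (0 : ℝ) < C := hlam.trans_lt hlt
  refine sq_sub_lt_of_lt_exp hε (by exact_mod_cast hm) hC (h.trans_le ?_)
  have := one_sub_Vpois_le_exp_neg_sq (μ := m * lam) (Nat.mul_pos hm (by exact_mod_cast hC))
    (by positivity) (by push_cast; gcongr)
  exact_mod_cast this

lemma sq_sub_lt_of_lt_Vpois {m C : ℕ} (hm : 0 < m) {ε lam : ℝ} (hε : 0 < ε) (hle : C ≤ lam)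
    (h : ε < Vpois (m * lam) (m * C)) :
    (C - lam) ^ 2 < 2 * lam * log (1 / ε) / m := by
  have hC : 0 < C := by
    refine Nat.pos_of_ne_zero fun hC ↦ ?_
    simp only [Vpois, hC, mul_zero, range_zero, sum_empty] at h
    linarith
  refine sq_sub_lt_of_lt_exp hε (by exact_mod_cast hm) ((Nat.cast_pos.2 hC).trans_le hle)
    (h.trans_le ?_)
  have := Vpois_le_exp_neg_sq (μ := m * lam) (Nat.mul_pos hm hC) (by push_cast; gcongr)
  push_cast at this
  rwa [sub_sq_comm] at this

lemma le_add_two_mul_of_sq_le {x a b : ℝ} (ha : 0 ≤ a) (hb : 0 ≤ b)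
    (h : x ^ 2 ≤ a ^ 2 + 2 * b * x) : x ≤ a + 2 * b := by
  nlinarith

/-- Fix `m, C ∈ ℕ` (with `m ≥ 1`) and `ε > 0`. If `λ ∈ ℝ₊` is such that
`|V^pois(mλ, mC) − V^det(λ, C)| > ε`, then
`C − √(2C·log(1/ε)/m) ≤ λ ≤ C + √(2C·log(1/ε)/m) + 4·log(1/ε)/m`. -/
theorem stmt12 (m C : ℕ) (hm : 0 < m) (ε : ℝ) (hε : 0 < ε) (lam : ℝ) (hlam : 0 ≤ lam)
    (h : ε < |Vpois ((m : ℝ) * lam) (m * C) - Vdet lam C|) :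
    (C : ℝ) - Real.sqrt (2 * (C : ℝ) * Real.log (1 / ε) / (m : ℝ)) ≤ lam ∧
    lam ≤ (C : ℝ) + Real.sqrt (2 * (C : ℝ) * Real.log (1 / ε) / (m : ℝ)) +
      4 * Real.log (1 / ε) / (m : ℝ) := by
  have hm' : (0 : ℝ) < m := by exact_mod_cast hm
  have hV₀ := Vpois_nonneg (by positivity : 0 ≤ (m : ℝ) * lam) (m * C)
  have hV₁ := Vpois_le_one (by positivity : 0 ≤ (m : ℝ) * lam) (m * C)
  set L := log (1 / ε)
  rcases lt_or_ge lam C with hlt | hle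
  · rw [Vdet, if_pos hlt, abs_of_nonpos (by linarith)] at h
    have hL : 0 ≤ L := log_nonneg ((one_le_div hε).2 (by linarith))
    have hsq : (lam - C) ^ 2 < 2 * C * L / m :=
      sq_sub_lt_of_lt_one_sub_Vpois hm hε hlam hlt (by linarith)
    constructor
    · linarith [neg_abs_le (lam - C), abs_le_sqrt hsq.le]
    · linarith [sqrt_nonneg (2 * C * L / m), div_nonneg (mul_nonneg zero_le_four hL) hm'.le]
  · rw [Vdet, if_neg (not_lt.2 hle), sub_zero, abs_of_nonneg hV₀] at h
    have hL : 0 ≤ L := log_nonneg ((one_le_div hε).2 (by linarith))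
    have hsq : (C - lam) ^ 2 < 2 * lam * L / m := sq_sub_lt_of_lt_Vpois hm hε hle h
    have hdev := le_add_two_mul_of_sq_le (x := lam - C) (sqrt_nonneg (2 * C * L / m))
        (div_nonneg hL hm'.le) <| by
      rw [sq_sqrt (by positivity), sub_sq_comm]
      linarith [show 2 * lam * L / m = 2 * C * L / m + 2 * (L / m) * (lam - C) by ring]
    constructor
    · linarith [sqrt_nonneg (2 * C * L / m)]
    · linarith [div_nonneg hL hm'.le, mul_div_assoc 4 L m]
end
end

section
/- For any integer ℓ ≥ 1, the function AR : (0,1] → ℝ₊ defined by AR(q) = 1/q − ℓ·(1−q)^ℓ/(1 − (1−q)^ℓ) is weakly decreasing in q on (0,1]. -/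
/-! Put `x = 1 - q ∈ [0, 1)` and `S_k(x) = ∑_{i<k} x^i`, so that `1/q = S_ℓ(x) / (1 - x^ℓ)` and
`AR(q) = ℓ - ∑_{k<ℓ} (1 - x^k) / (1 - x^ℓ)`. For `k ≤ ℓ` the ratio
`(1 - x^k) / (1 - x^ℓ) = S_k(x) / S_ℓ(x)` decreases in `x`: splitting `S_ℓ = S_k + ∑_{k≤i<ℓ} x^i`,
the inequality `S_k(x) S_ℓ(y) ≤ S_k(y) S_ℓ(x)` for `y ≤ x` reduces to the termwise
`x^j y^i ≤ y^j x^i` for `j ≤ i`. Hence `AR` increases in `x`, i.e. decreases in `q`. -/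

open Finset

section OrderedSemiring

variable {R : Type*} [CommSemiring R] [PartialOrder R] [IsOrderedRing R] {x y : R}

lemma pow_mul_pow_le_pow_mul_pow (hy : 0 ≤ y) (hyx : y ≤ x) {i j : ℕ} (hji : j ≤ i) :
    x ^ j * y ^ i ≤ y ^ j * x ^ i := by
  obtain ⟨d, rfl⟩ := Nat.exists_eq_add_of_le hji
  calc x ^ j * y ^ (j + d) = (x * y) ^ j * y ^ d := by ring
    _ ≤ (x * y) ^ j * x ^ d :=
        mul_le_mul_of_nonneg_left (pow_le_pow_left₀ hy hyx d)
          (pow_nonneg (mul_nonneg (hy.trans hyx) hy) j)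
    _ = y ^ j * x ^ (j + d) := by ring

lemma geom_sum_mul_geom_sum_le (hy : 0 ≤ y) (hyx : y ≤ x) {k l : ℕ} (hkl : k ≤ l) :
    (∑ i ∈ range k, x ^ i) * ∑ i ∈ range l, y ^ i
      ≤ (∑ i ∈ range k, y ^ i) * ∑ i ∈ range l, x ^ i := by
  have hsplit : ∀ z : R, ∑ i ∈ range l, z ^ i = ∑ i ∈ range k, z ^ i + ∑ i ∈ Ico k l, z ^ i :=
    fun z => (sum_range_add_sum_Ico _ hkl).symm
  have htail : (∑ j ∈ range k, x ^ j) * ∑ i ∈ Ico k l, y ^ i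
      ≤ (∑ j ∈ range k, y ^ j) * ∑ i ∈ Ico k l, x ^ i := by
    simp only [sum_mul_sum]
    refine sum_le_sum fun j hj => sum_le_sum fun i hi => ?_
    exact pow_mul_pow_le_pow_mul_pow hy hyx ((mem_range.1 hj).le.trans (mem_Ico.1 hi).1)
  rw [hsplit x, hsplit y, mul_add, mul_add, mul_comm (∑ i ∈ range k, x ^ i)]
  exact add_le_add le_rfl htail

end OrderedSemiring

lemma one_sub_pow_mul_one_sub_pow_le {R : Type*} [CommRing R] [PartialOrder R] [IsOrderedRing R]
    {x y : R} (hy : 0 ≤ y) (hyx : y ≤ x) (hx : x ≤ 1) {k l : ℕ} (hkl : k ≤ l) :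
    (1 - x ^ k) * (1 - y ^ l) ≤ (1 - y ^ k) * (1 - x ^ l) := by
  simp only [← mul_neg_geom_sum]
  have h : 0 ≤ (1 - x) * (1 - y) := mul_nonneg (sub_nonneg.2 hx) (sub_nonneg.2 (hyx.trans hx))
  calc (1 - x) * (∑ i ∈ range k, x ^ i) * ((1 - y) * ∑ i ∈ range l, y ^ i)
      = (1 - x) * (1 - y) * ((∑ i ∈ range k, x ^ i) * ∑ i ∈ range l, y ^ i) := by ring
    _ ≤ (1 - x) * (1 - y) * ((∑ i ∈ range k, y ^ i) * ∑ i ∈ range l, x ^ i) :=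
        mul_le_mul_of_nonneg_left (geom_sum_mul_geom_sum_le hy hyx hkl) h
    _ = (1 - y) * (∑ i ∈ range k, y ^ i) * ((1 - x) * ∑ i ∈ range l, x ^ i) := by ring

lemma antitoneOn_one_sub_pow_div_one_sub_pow {K : Type*} [Field K] [LinearOrder K]
    [IsStrictOrderedRing K] {k l : ℕ} (hkl : k ≤ l) (hl : l ≠ 0) :
    AntitoneOn (fun x : K => (1 - x ^ k) / (1 - x ^ l)) (Set.Ico 0 1) := by
  intro y ⟨hy0, hy1⟩ x ⟨hx0, hx1⟩ hyx
  have hpos : ∀ z : K, 0 ≤ z → z < 1 → 0 < 1 - z ^ l :=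
    fun z hz0 hz1 => sub_pos.2 (pow_lt_one₀ hz0 hz1 hl)
  rw [div_le_div_iff₀ (hpos x hx0 hx1) (hpos y hy0 hy1)]
  exact one_sub_pow_mul_one_sub_pow_le hy0 hyx hx1.le hkl

lemma one_div_one_sub_sub_eq_sub_sum {K : Type*} [Field K] {x : K} (hx : x ≠ 1) {l : ℕ}
    (hxl : x ^ l ≠ 1) :
    1 / (1 - x) - l * x ^ l / (1 - x ^ l) = l - ∑ k ∈ range l, (1 - x ^ k) / (1 - x ^ l) := by
  have hx' : 1 - x ≠ 0 := sub_ne_zero.2 hx.symm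
  have hxl' : 1 - x ^ l ≠ 0 := sub_ne_zero.2 hxl.symm
  rw [← sum_div, sum_sub_distrib, sum_const, card_range, nsmul_one]
  field_simp
  linear_combination -mul_neg_geom_sum x l

/-- For any integer `ℓ ≥ 1`, the function
`AR(q) = 1/q − ℓ·(1−q)^ℓ/(1 − (1−q)^ℓ)` is weakly decreasing on `(0, 1]`. -/
theorem stmt19 (l : ℕ) (hl : 1 ≤ l) :
    AntitoneOn (fun q : ℝ => 1 / q - (l : ℝ) * (1 - q) ^ l / (1 - (1 - q) ^ l))
      (Set.Ioc (0 : ℝ) 1) := by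
  have hl0 : l ≠ 0 := Nat.one_le_iff_ne_zero.1 hl
  have hmem : ∀ q ∈ Set.Ioc (0 : ℝ) 1, 1 - q ∈ Set.Ico (0 : ℝ) 1 :=
    fun q ⟨hq0, hq1⟩ => ⟨sub_nonneg.2 hq1, sub_lt_self 1 hq0⟩
  have hAR : ∀ q ∈ Set.Ioc (0 : ℝ) 1, 1 / q - (l : ℝ) * (1 - q) ^ l / (1 - (1 - q) ^ l)
      = l - ∑ k ∈ range l, (1 - (1 - q) ^ k) / (1 - (1 - q) ^ l) := fun q hq => by
    obtain ⟨hx0, hx1⟩ := hmem q hq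
    simpa only [sub_sub_cancel] using
      one_div_one_sub_sub_eq_sub_sum hx1.ne (pow_lt_one₀ hx0 hx1 hl0).ne
  intro a ha b hb hab
  dsimp only
  rw [hAR a ha, hAR b hb]
  refine sub_le_sub_left (sum_le_sum fun k hk => ?_) _
  exact antitoneOn_one_sub_pow_div_one_sub_pow (mem_range.1 hk).le hl0
    (hmem b hb) (hmem a ha) (sub_le_sub_left hab 1)
end
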